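/- Let G be an HZ-graph with maximum degree Δ ≥ 4 such that N_{Δ−1}(u) = N_{Δ−1}(v) for every pair of degree-Δ vertices u, v. Then the bipartite subgraph of G between V_Δ and V_{Δ−1} is complete bipartite, i.e., every degree-Δ vertex is adjacent to every degree-(Δ−1) vertex. -/

import Mathlib

open SimpleGraph

/-- A proper edge `k`-coloring of `G` with colors in `[1, k]`. -/
def IsProperEdgeColoring {V : Type*} (G : SimpleGraph V) (k : ℕ) (c : Sym2 V → ℕ) : Prop :=
  (∀ e ∈ G.edgeSet, c e ∈ Finset.Icc 1 k) ∧
  ∀ e ∈ G.edgeSet, ∀ f ∈ G.edgeSet, e ≠ f → (∃ v : V, v ∈ e ∧ v ∈ f) → c e ≠ c f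

/-- `G` has a proper edge coloring with `k` colors. -/
def EdgeColorable {V : Type*} (G : SimpleGraph V) (k : ℕ) : Prop :=
  ∃ c : Sym2 V → ℕ, IsProperEdgeColoring G k c

/-- The set of colors of `[1, k]` missing at `v`. -/
def missingColors {V : Type*} (G : SimpleGraph V) (k : ℕ) (c : Sym2 V → ℕ) (v : V) : Set ℕ :=
  {α | α ∈ Finset.Icc 1 k ∧ ¬ ∃ e ∈ G.edgeSet, v ∈ e ∧ c e = α}

/-- The subgraph of `G` consisting of the edges colored `α` or `β`;
its components are the `(α, β)`-chains. -/
def chainGraph {V : Type*} (G : SimpleGraph V) (c : Sym2 V → ℕ) (α β : ℕ) : SimpleGraph V :=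
  SimpleGraph.fromEdgeSet {e ∈ G.edgeSet | c e = α ∨ c e = β}

/-!
Pass to an edge-critical subgraph `H` of `G` that is not `Δ`-edge-colourable. By Vizing's adjacency
lemma (proved with multifans and Kempe-chain swaps), an edge `ab` of `H` forces at least
`Δ + 1 - deg_H b` neighbours of `a` of degree `Δ` other than `b`. Applied to an edge from a vertex
of degree `Δ` to `a`, and since a vertex of degree `Δ` has at most two neighbours of degree `Δ`,
this shows that `H` keeps every `G`-edge at a vertex it touches; `G` being connected, `H` touches
every vertex. So a vertex `x` of degree `Δ - 1` has a neighbour `z` of degree `Δ`, and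
`N_{Δ-1}(z) = N_{Δ-1}(u)` puts `x` next to `u`.
-/

open Finset Classical

-- Degrees in `H.deleteEdges s` must use the same classical instances as the general lemmas.
attribute [-instance]
  SimpleGraph.instDecidableRelAdjDeleteEdgesOfDecidablePredSym2MemSetOfDecidableEq

section

variable {V : Type*}

namespace SimpleGraph

variable {G : SimpleGraph V}

theorem ConnectedComponent.card_le_two_of_degree_le_one [Fintype V] (hG : ∀ v, G.degree v ≤ 2)
    (C : G.ConnectedComponent) {T : Finset V} (hT : ∀ v ∈ T, v ∈ C.supp ∧ G.degree v ≤ 1) :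
    #T ≤ 2 := by
  have hdeg (v : C.supp) : (G.induce C.supp).degree v = G.degree v :=
    degree_induce_of_neighborSet_subset fun w hw =>
      (C.mem_supp_iff w).2 ((ConnectedComponent.connectedComponentMk_eq_of_adj hw).symm.trans
        ((C.mem_supp_iff v).1 v.2))
  have hTcard : #{v : C.supp | (v : V) ∈ T} = #T :=
    card_nbij Subtype.val (fun v hv => (mem_filter.1 hv).2) Subtype.val_injective.injOn
      fun v hv => ⟨⟨v, (hT v hv).1⟩, by simpa using hv, rfl⟩
  -- handshake lemma for the component, with a deficiency of at least one at each vertex of `T`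
  have hsum : 2 * #(G.induce C.supp).edgeFinset + #T ≤ 2 * Fintype.card C.supp := by
    rw [← sum_degrees_eq_twice_card_edges, ← hTcard, card_filter, ← sum_add_distrib]
    calc _ ≤ ∑ _ : C.supp, 2 := sum_le_sum fun v _ => by
            rw [hdeg]
            split_ifs with h
            · have := (hT v h).2; omega
            · exact hG v
      _ = 2 * Fintype.card C.supp := by rw [sum_const, card_univ, smul_eq_mul, mul_comm]
  have hconn : (G.induce C.supp).Connected := C.connected_toSimpleGraph
  replace hconn := hconn.card_vert_le_card_edgeSet_add_one
  rw [Nat.card_eq_fintype_card, Nat.card_eq_fintype_card, ← edgeFinset_card] at hconn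
  omega

theorem degree_deleteEdges_add_one [Fintype V] {e : Sym2 V} {a : V} (he : e ∈ G.edgeSet)
    (ha : a ∈ e) : (G.deleteEdges {e}).degree a + 1 = G.degree a := by
  obtain ⟨b, rfl⟩ := Sym2.mem_iff_exists.1 ha
  have h : G.Adj a b := he
  have : (G.deleteEdges {s(a, b)}).neighborFinset a = (G.neighborFinset a).erase b := by
    ext w
    simp only [mem_neighborFinset, mem_erase, deleteEdges_adj, Set.mem_singleton_iff,
      Sym2.congr_right]
    exact and_comm
  rw [← card_neighborFinset_eq_degree, this, card_erase_add_one ((mem_neighborFinset ..).2 h),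
    card_neighborFinset_eq_degree]

theorem degree_deleteEdges_of_notMem [Fintype V] {e : Sym2 V} {v : V} (hv : v ∉ e) :
    (G.deleteEdges {e}).degree v = G.degree v := by
  have : (G.deleteEdges {e}).neighborFinset v = G.neighborFinset v := by
    ext w
    simp only [mem_neighborFinset, deleteEdges_adj, Set.mem_singleton_iff, and_iff_left_iff_imp]
    rintro _ rfl
    exact hv (Sym2.mem_mk_left v w)
  rw [← card_neighborFinset_eq_degree, this, card_neighborFinset_eq_degree]

theorem Reachable.mem_of_adj_mem {s : Set V} {u v : V} (hs : ∀ ⦃v w⦄, G.Adj v w → v ∈ s → w ∈ s)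
    (h : G.Reachable u v) (hu : u ∈ s) : v ∈ s := by
  obtain ⟨p⟩ := h
  induction p with
  | nil => exact hu
  | cons hadj _ ih => exact ih (hs hadj hu)

theorem degree_induce_eq_card_filter [Fintype V] {s : Set V} [DecidablePred (· ∈ s)] (v : s)
    [Fintype ((G.induce s).neighborSet v)] :
    (G.induce s).degree v = #{w ∈ G.neighborFinset v | w ∈ s} := by
  have : {w ∈ G.neighborFinset v | w ∈ s} = G.neighborFinset v ∩ s.toFinset := by ext; simp
  rw [this, ← card_neighborFinset_eq_degree, ← card_map (.subtype (· ∈ s))]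
  convert congrArg card (map_neighborFinset_induce (G := G) v)

theorem degree_le_maxDegree_of_le [Fintype V] {H : SimpleGraph V} (h : H ≤ G) (v : V) :
    H.degree v ≤ G.maxDegree :=
  (degree_le_of_le h).trans (G.degree_le_maxDegree v)

theorem degree_eq_maxDegree_of_le [Fintype V] {H : SimpleGraph V} {v : V} (h : H ≤ G)
    (hv : H.degree v = G.maxDegree) : G.degree v = G.maxDegree :=
  (G.degree_le_maxDegree v).antisymm (hv ▸ degree_le_of_le h)

end SimpleGraph

section Coloring

variable {G G' : SimpleGraph V} {k : ℕ} {c : Sym2 V → ℕ} {v w : V} {α : ℕ}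

theorem isProperEdgeColoring_iff :
    IsProperEdgeColoring G k c ↔ (∀ e ∈ G.edgeSet, c e ∈ Icc 1 k) ∧
      ∀ v w w', G.Adj v w → G.Adj v w' → w ≠ w' → c s(v, w) ≠ c s(v, w') := by
  refine and_congr_right fun _ =>
    ⟨fun h v w w' hw hw' hne => ?_, fun h e he f hf hef ⟨v, hve, hvf⟩ => ?_⟩
  · exact h _ hw _ hw' (Sym2.congr_right.not.2 hne) ⟨v, Sym2.mem_mk_left _ _, Sym2.mem_mk_left _ _⟩
  · obtain ⟨w, rfl⟩ := Sym2.mem_iff_exists.mp hve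
    obtain ⟨w', rfl⟩ := Sym2.mem_iff_exists.mp hvf
    exact h v w w' he hf (by rintro rfl; exact hef rfl)

theorem mem_missingColors_iff :
    α ∈ missingColors G k c v ↔ α ∈ Icc 1 k ∧ ∀ w, G.Adj v w → c s(v, w) ≠ α := by
  refine and_congr_right fun _ => ⟨fun h w hw hc => h ⟨_, hw, Sym2.mem_mk_left _ _, hc⟩, ?_⟩
  rintro h ⟨e, he, hve, rfl⟩
  obtain ⟨w, rfl⟩ := Sym2.mem_iff_exists.mp hve
  exact h w he rfl

theorem IsProperEdgeColoring.of_le (h : G ≤ G') (hc : IsProperEdgeColoring G' k c) :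
    IsProperEdgeColoring G k c :=
  ⟨fun e he => hc.1 e (edgeSet_mono h he),
    fun e he f hf => hc.2 e (edgeSet_mono h he) f (edgeSet_mono h hf)⟩

theorem missingColors_subset_of_le (h : G ≤ G') :
    missingColors G' k c v ⊆ missingColors G k c v := fun _ hα =>
  mem_missingColors_iff.2 ⟨hα.1, fun w hw => (mem_missingColors_iff.1 hα).2 w (h hw)⟩

theorem IsProperEdgeColoring.color_mem_Icc (hc : IsProperEdgeColoring G k c) (h : G.Adj v w) :
    c s(v, w) ∈ Icc 1 k :=
  hc.1 _ h

theorem color_notMem_missingColors (h : G.Adj v w) : c s(v, w) ∉ missingColors G k c v :=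
  fun hα => (mem_missingColors_iff.1 hα).2 w h rfl

noncomputable def missingFinset (G : SimpleGraph V) (k : ℕ) (c : Sym2 V → ℕ) (v : V) :
    Finset ℕ :=
  {α ∈ Icc 1 k | α ∈ missingColors G k c v}

@[simp]
theorem mem_missingFinset : α ∈ missingFinset G k c v ↔ α ∈ missingColors G k c v :=
  mem_filter.trans <| and_iff_right_of_imp fun h => h.1

@[simp]
theorem coe_missingFinset : (missingFinset G k c v : Set ℕ) = missingColors G k c v := by
  ext; simp

theorem le_degree_add_card_missingFinset [Fintype V] :
    k ≤ G.degree v + #(missingFinset G k c v) := by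
  have hcover :
      Icc 1 k ⊆ (G.neighborFinset v).image (fun w => c s(v, w)) ∪ missingFinset G k c v := by
    intro α hα
    by_cases hm : α ∈ missingColors G k c v
    · exact mem_union_right _ (mem_missingFinset.2 hm)
    · obtain ⟨w, hw, hcw⟩ : ∃ w, G.Adj v w ∧ c s(v, w) = α := by
        by_contra! h
        exact hm (mem_missingColors_iff.2 ⟨hα, h⟩)
      exact mem_union_left _ (mem_image.2 ⟨w, (G.mem_neighborFinset v w).2 hw, hcw⟩)
  calc k = #(Icc 1 k) := by simp
    _ ≤ _ := (card_le_card hcover).trans (card_union_le _ _)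
    _ ≤ G.degree v + #(missingFinset G k c v) := by
      gcongr
      exact card_image_le

theorem exists_mem_missingColors_of_degree_lt [Fintype V] (h : G.degree v < k) :
    ∃ α, α ∈ missingColors G k c v := by
  have := le_degree_add_card_missingFinset (G := G) (k := k) (c := c) (v := v)
  obtain ⟨α, hα⟩ := card_pos.1 (show 0 < #(missingFinset G k c v) by omega)
  exact ⟨α, mem_missingFinset.1 hα⟩

theorem IsProperEdgeColoring.update {a b : V} {δ : ℕ} (hab : G.Adj a b)
    (hc : IsProperEdgeColoring (G.deleteEdges {s(a, b)}) k c)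
    (ha : δ ∈ missingColors (G.deleteEdges {s(a, b)}) k c a)
    (hb : δ ∈ missingColors (G.deleteEdges {s(a, b)}) k c b) :
    IsProperEdgeColoring G k (Function.update c s(a, b) δ) := by
  rw [isProperEdgeColoring_iff] at hc ⊢
  have hdel : ∀ {v w}, G.Adj v w → s(v, w) ≠ s(a, b) → (G.deleteEdges {s(a, b)}).Adj v w :=
    fun h hne => (deleteEdges_adj ..).2 ⟨h, hne⟩
  have hnew : ∀ {v w w'}, G.Adj v w' → s(v, w) = s(a, b) → w ≠ w' → c s(v, w') ≠ δ := by
    intro v w w' hw' he hne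
    have hne' : s(v, w') ≠ s(a, b) := he ▸ Sym2.congr_right.not.2 hne.symm
    have hv : v = a ∨ v = b := Sym2.mem_iff.1 (he ▸ Sym2.mem_mk_left v w)
    rcases hv with rfl | rfl
    · exact (mem_missingColors_iff.1 ha).2 w' (hdel hw' hne')
    · exact (mem_missingColors_iff.1 hb).2 w' (hdel hw' hne')
  refine ⟨fun e he => ?_, fun v w w' hw hw' hne => ?_⟩
  · by_cases h : e = s(a, b)
    · rw [h, Function.update_self]; exact ha.1
    · rw [Function.update_of_ne h]; exact hc.1 e (by rw [edgeSet_deleteEdges]; exact ⟨he, h⟩)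
  · by_cases h : s(v, w) = s(a, b)
    · rw [h, Function.update_self, Function.update_of_ne (h ▸ Sym2.congr_right.not.2 hne.symm)]
      exact (hnew hw' h hne).symm
    by_cases h' : s(v, w') = s(a, b)
    · rw [h', Function.update_self, Function.update_of_ne h]
      exact hnew hw h' hne.symm
    rw [Function.update_of_ne h, Function.update_of_ne h']
    exact hc.2 v w w' (hdel hw h) (hdel hw' h') hne

theorem missingColors_update_of_notMem {e : Sym2 V} {δ : ℕ} (hv : v ∉ e) :
    missingColors G k (Function.update c e δ) v = missingColors G k c v := by
  ext α
  simp only [mem_missingColors_iff]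
  refine and_congr_right fun _ => forall₂_congr fun w _ => ?_
  rw [Function.update_of_ne (by rintro rfl; exact hv (Sym2.mem_mk_left v w))]

theorem color_mem_missingColors_update {δ : ℕ} (hc : IsProperEdgeColoring G k c) (h : G.Adj v w)
    (hδ : c s(v, w) ≠ δ) : c s(v, w) ∈ missingColors G k (Function.update c s(v, w) δ) v := by
  refine mem_missingColors_iff.2 ⟨hc.color_mem_Icc h, fun w' hw' => ?_⟩
  by_cases hw : w' = w
  · rw [hw, Function.update_self]; exact hδ.symm
  · rw [Function.update_of_ne (Sym2.congr_right.not.2 hw)]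
    exact ((isProperEdgeColoring_iff.1 hc).2 v w w' h hw' (Ne.symm hw)).symm

theorem exists_adj_of_not_edgeColorable (hG : ¬ EdgeColorable G k) : ∃ a b, G.Adj a b := by
  by_contra! h
  have hE (e : Sym2 V) (he : e ∈ G.edgeSet) : False := by
    induction e with
    | h a b => exact h a b he
  exact hG ⟨fun _ => 1, fun e he => (hE e he).elim, fun e he => (hE e he).elim⟩

end Coloring

section Kempe

variable {G : SimpleGraph V} {k : ℕ} {c : Sym2 V → ℕ} {u v w : V} {α β γ : ℕ}

theorem chainGraph_adj :
    (chainGraph G c α β).Adj v w ↔ G.Adj v w ∧ (c s(v, w) = α ∨ c s(v, w) = β) := by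
  rw [chainGraph, fromEdgeSet_adj]
  exact ⟨fun h => h.1, fun h => ⟨h, h.1.ne⟩⟩

theorem degree_chainGraph_le_card [Fintype V] (hc : IsProperEdgeColoring G k c) (t : Finset ℕ)
    (ht : ∀ w, (chainGraph G c α β).Adj v w → c s(v, w) ∈ t) :
    (chainGraph G c α β).degree v ≤ #t := by
  rw [← card_neighborFinset_eq_degree]
  refine card_le_card_of_injOn (fun w => c s(v, w))
    (fun w hw => ht w ((mem_neighborFinset ..).1 hw)) fun w hw w' hw' heq => ?_
  by_contra hne
  exact (isProperEdgeColoring_iff.1 hc).2 v w w' (chainGraph_adj.1 ((mem_neighborFinset ..).1 hw)).1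
    (chainGraph_adj.1 ((mem_neighborFinset ..).1 hw')).1 hne heq

theorem degree_chainGraph_le_two [Fintype V] (hc : IsProperEdgeColoring G k c) (v : V) :
    (chainGraph G c α β).degree v ≤ 2 :=
  (degree_chainGraph_le_card hc {α, β} fun w hw => by
    rcases (chainGraph_adj.1 hw).2 with h | h <;> simp [h]).trans (card_le_two)

theorem degree_chainGraph_le_one [Fintype V] (hc : IsProperEdgeColoring G k c)
    (h : α ∈ missingColors G k c v ∨ β ∈ missingColors G k c v) :
    (chainGraph G c α β).degree v ≤ 1 := by
  have hcol : ∀ w, (chainGraph G c α β).Adj v w → c s(v, w) ∈ ({α, β} \ missingFinset G k c v) := by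
    intro w hw
    rw [mem_sdiff, mem_missingFinset]
    refine ⟨?_, color_notMem_missingColors (chainGraph_adj.1 hw).1⟩
    rcases (chainGraph_adj.1 hw).2 with h | h <;> simp [h]
  refine (degree_chainGraph_le_card hc _ hcol).trans (card_le_one.2 fun γ hγ γ' hγ' => ?_)
  simp only [mem_sdiff, mem_insert, mem_singleton, mem_missingFinset] at hγ hγ'
  grind

theorem not_reachable_chainGraph_of_reachable [Fintype V] (hc : IsProperEdgeColoring G k c)
    {a b d : V} (hab : a ≠ b) (had : a ≠ d) (hbd : b ≠ d)
    (ha : α ∈ missingColors G k c a ∨ β ∈ missingColors G k c a)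
    (hb : α ∈ missingColors G k c b ∨ β ∈ missingColors G k c b)
    (hd : α ∈ missingColors G k c d ∨ β ∈ missingColors G k c d)
    (h : (chainGraph G c α β).Reachable a b) : ¬ (chainGraph G c α β).Reachable a d := by
  intro h'
  have hT : ∀ v ∈ ({a, b, d} : Finset V), v ∈ ((chainGraph G c α β).connectedComponentMk a).supp ∧
      (chainGraph G c α β).degree v ≤ 1 := by
    simp only [mem_insert, mem_singleton]
    rintro v (rfl | rfl | rfl)
    · exact ⟨rfl, degree_chainGraph_le_one hc ha⟩
    · exact ⟨ConnectedComponent.eq.2 h.symm, degree_chainGraph_le_one hc hb⟩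
    · exact ⟨ConnectedComponent.eq.2 h'.symm, degree_chainGraph_le_one hc hd⟩
  have := ConnectedComponent.card_le_two_of_degree_le_one (degree_chainGraph_le_two hc) _ hT
  rw [card_eq_three.2 ⟨a, b, d, hab, had, hbd, rfl⟩] at this
  omega

/-- Kempe change along the `(α, β)`-chain through `u`. Edges of any other colour are fixed by
`Equiv.swap α β`, so the condition need not test the colour. -/
noncomputable def kempeSwap (G : SimpleGraph V) (c : Sym2 V → ℕ) (α β : ℕ) (u : V) (e : Sym2 V) :
    ℕ :=
  if ∃ v ∈ e, (chainGraph G c α β).Reachable u v then Equiv.swap α β (c e) else c e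

theorem kempeSwap_of_adj (h : G.Adj v w) :
    kempeSwap G c α β u s(v, w) =
      if (chainGraph G c α β).Reachable u v then Equiv.swap α β (c s(v, w)) else c s(v, w) := by
  by_cases hcol : c s(v, w) = α ∨ c s(v, w) = β
  · have hvw : (chainGraph G c α β).Reachable v w := (chainGraph_adj.2 ⟨h, hcol⟩).reachable
    have hiff : (∃ v' ∈ s(v, w), (chainGraph G c α β).Reachable u v') ↔
        (chainGraph G c α β).Reachable u v := by
      simp only [Sym2.mem_iff, exists_eq_or_imp, exists_eq_left]
      exact ⟨fun h' => h'.elim id fun h'' => h''.trans hvw.symm, Or.inl⟩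
    rw [kempeSwap, if_congr hiff rfl rfl]
  · rw [not_or] at hcol
    rw [kempeSwap, Equiv.swap_apply_of_ne_of_ne hcol.1 hcol.2, ite_self, ite_self]

theorem kempeSwap_of_not_reachable (h : G.Adj v w) (hv : ¬ (chainGraph G c α β).Reachable u v) :
    kempeSwap G c α β u s(v, w) = c s(v, w) := by
  rw [kempeSwap_of_adj h, if_neg hv]

theorem swap_mem_Icc_iff (hα : α ∈ Icc 1 k) (hβ : β ∈ Icc 1 k) :
    Equiv.swap α β γ ∈ Icc 1 k ↔ γ ∈ Icc 1 k := by
  rw [Equiv.swap_apply_def]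
  split_ifs with h h'
  · exact iff_of_true hβ (h ▸ hα)
  · exact iff_of_true hα (h' ▸ hβ)
  · rfl

theorem IsProperEdgeColoring.kempeSwap (hc : IsProperEdgeColoring G k c) (hα : α ∈ Icc 1 k)
    (hβ : β ∈ Icc 1 k) : IsProperEdgeColoring G k (kempeSwap G c α β u) := by
  rw [isProperEdgeColoring_iff] at hc ⊢
  refine ⟨fun e he => ?_, fun v w w' hw hw' hne => ?_⟩
  · induction e with
    | h v w =>
      rw [kempeSwap_of_adj he]
      split_ifs
      · exact (swap_mem_Icc_iff hα hβ).2 (hc.1 _ he)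
      · exact hc.1 _ he
  · rw [kempeSwap_of_adj hw, kempeSwap_of_adj hw']
    split_ifs
    · exact (Equiv.injective _).ne (hc.2 v w w' hw hw' hne)
    · exact hc.2 v w w' hw hw' hne

theorem missingColors_kempeSwap_of_not_reachable
    (hv : ¬ (chainGraph G c α β).Reachable u v) :
    missingColors G k (kempeSwap G c α β u) v = missingColors G k c v := by
  ext γ
  simp only [mem_missingColors_iff]
  exact and_congr_right fun _ => forall₂_congr fun w hw => by
    rw [kempeSwap_of_not_reachable hw hv]

theorem mem_missingColors_kempeSwap_of_reachable (hα : α ∈ Icc 1 k) (hβ : β ∈ Icc 1 k)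
    (hv : (chainGraph G c α β).Reachable u v) :
    γ ∈ missingColors G k (kempeSwap G c α β u) v ↔
      Equiv.swap α β γ ∈ missingColors G k c v := by
  simp only [mem_missingColors_iff, swap_mem_Icc_iff hα hβ]
  refine and_congr_right fun _ => forall₂_congr fun w hw => ?_
  rw [kempeSwap_of_adj hw, if_pos hv, Ne, Equiv.swap_apply_eq_iff]

theorem mem_missingColors_kempeSwap_of_ne (hα : α ∈ Icc 1 k) (hβ : β ∈ Icc 1 k) (hγα : γ ≠ α)
    (hγβ : γ ≠ β) :
    γ ∈ missingColors G k (kempeSwap G c α β u) v ↔ γ ∈ missingColors G k c v := by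
  by_cases hv : (chainGraph G c α β).Reachable u v
  · rw [mem_missingColors_kempeSwap_of_reachable hα hβ hv, Equiv.swap_apply_of_ne_of_ne hγα hγβ]
  · rw [missingColors_kempeSwap_of_not_reachable hv]

end Kempe

section Multifan

variable {H : SimpleGraph V} {k : ℕ} {φ : Sym2 V → ℕ} {x y z : V} {ys : ℕ → V} {p i j : ℕ}

/-- A multifan `ys 0, …, ys (p - 1)` at `x`, for a colouring `φ` of `H` minus the uncoloured edge
`s(x, y)`. -/
structure IsMultifan (H : SimpleGraph V) (k : ℕ) (φ : Sym2 V → ℕ) (x y : V) (ys : ℕ → V)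
    (p : ℕ) : Prop where
  zero : ys 0 = y
  adj : ∀ i < p, H.Adj x (ys i)
  injOn : Set.InjOn ys (Set.Iio p)
  color : ∀ i, 0 < i → i < p →
    ∃ j < i, φ s(x, ys i) ∈ missingColors (H.deleteEdges {s(x, y)}) k φ (ys j)

namespace IsMultifan

theorem mono (hF : IsMultifan H k φ x y ys p) {q : ℕ} (hq : q ≤ p) :
    IsMultifan H k φ x y ys q :=
  ⟨hF.zero, fun i hi => hF.adj i (hi.trans_le hq), hF.injOn.mono (Set.Iio_subset_Iio hq),
    fun i h0 hi => hF.color i h0 (hi.trans_le hq)⟩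

theorem ne_of_ne (hF : IsMultifan H k φ x y ys p) (hi : i < p) (hj : j < p) (hij : i ≠ j) :
    ys i ≠ ys j :=
  hF.injOn.ne hi hj hij

theorem ne_y (hF : IsMultifan H k φ x y ys p) (h0 : 0 < i) (hi : i < p) : ys i ≠ y :=
  hF.zero ▸ hF.ne_of_ne hi (h0.trans hi) h0.ne'

theorem adj_deleteEdges (hF : IsMultifan H k φ x y ys p) (h0 : 0 < i) (hi : i < p) :
    (H.deleteEdges {s(x, y)}).Adj x (ys i) :=
  (deleteEdges_adj ..).2 ⟨hF.adj i hi, Sym2.congr_right.not.2 (hF.ne_y h0 hi)⟩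

theorem notMem_edge (hF : IsMultifan H k φ x y ys p) (hi : i < p) (hj : j < p) (hij : j ≠ i) :
    ys j ∉ s(x, ys i) := by
  rw [Sym2.mem_iff, not_or]
  exact ⟨(hF.adj j hj).ne.symm, hF.ne_of_ne hj hi hij⟩

theorem edgeColorable (hxy : H.Adj x y)
    (hφ : IsProperEdgeColoring (H.deleteEdges {s(x, y)}) k φ) (hF : IsMultifan H k φ x y ys (i + 1))
    {δ : ℕ} (hδx : δ ∈ missingColors (H.deleteEdges {s(x, y)}) k φ x)
    (hδi : δ ∈ missingColors (H.deleteEdges {s(x, y)}) k φ (ys i)) : EdgeColorable H k := by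
  induction i using Nat.strong_induction_on generalizing φ δ with
  | _ i ih =>
    rcases Nat.eq_zero_or_pos i with rfl | h0
    · rw [hF.zero] at hδi
      exact ⟨_, hφ.update hxy hδx hδi⟩
    obtain ⟨j, hji, hγ⟩ := hF.color i h0 (lt_add_one i)
    have hadj := hF.adj_deleteEdges h0 (lt_add_one i)
    have hle := deleteEdges_le (G := H.deleteEdges {s(x, y)}) {s(x, ys i)}
    have hγδ : φ s(x, ys i) ≠ δ := fun h => color_notMem_missingColors hadj (h ▸ hδx)
    -- recolouring `s(x, ys i)` with `δ` frees its old colour at `x`, and it is missing at `ys j`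
    refine ih j hji (φ := Function.update φ s(x, ys i) δ)
      ((hφ.of_le hle).update hadj (missingColors_subset_of_le hle hδx)
        (missingColors_subset_of_le hle hδi)) ?_
      (color_mem_missingColors_update hφ hadj hγδ)
      (by rwa [missingColors_update_of_notMem (hF.notMem_edge (by omega) (by omega) hji.ne)])
    refine ⟨hF.zero, fun m hm => hF.adj m (by omega),
      hF.injOn.mono (Set.Iio_subset_Iio (by omega)), fun m hm0 hm => ?_⟩
    obtain ⟨l, hl, hcol⟩ := hF.color m hm0 (by omega)
    refine ⟨l, hl, ?_⟩
    rwa [missingColors_update_of_notMem (hF.notMem_edge (by omega) (by omega) (by omega)),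
      Function.update_of_ne
        (Sym2.congr_right.not.2 (hF.ne_of_ne (by omega) (by omega) (by omega)))]

theorem update (hF : IsMultifan H k φ x y ys p) (hz : H.Adj x z) (hzF : ∀ j < p, ys j ≠ z)
    (hi : i < p) (hcol : φ s(x, z) ∈ missingColors (H.deleteEdges {s(x, y)}) k φ (ys i)) :
    IsMultifan H k φ x y (Function.update ys p z) (p + 1) := by
  have hys : ∀ m < p, Function.update ys p z m = ys m := fun m hm => Function.update_of_ne hm.ne _ _
  refine ⟨(hys 0 (by omega)).trans hF.zero, fun m hm => ?_, fun m hm m' hm' heq => ?_,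
    fun m hm0 hm => ?_⟩
  · rcases (Nat.lt_succ_iff_lt_or_eq.1 hm) with hm | rfl
    · rw [hys m hm]; exact hF.adj m hm
    · rwa [Function.update_self]
  · simp only [Set.mem_Iio, Nat.lt_succ_iff_lt_or_eq] at hm hm'
    rcases hm with hm | rfl <;> rcases hm' with hm' | rfl
    · rw [hys m hm, hys m' hm'] at heq; exact hF.injOn hm hm' heq
    · rw [hys m hm, Function.update_self] at heq; exact absurd heq (hzF m hm)
    · rw [hys m' hm', Function.update_self] at heq; exact absurd heq.symm (hzF m' hm')
    · rfl
  · rcases (Nat.lt_succ_iff_lt_or_eq.1 hm) with hm | rfl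
    · obtain ⟨l, hl, hcol'⟩ := hF.color m hm0 hm
      exact ⟨l, hl, by rwa [hys m hm, hys l (hl.trans hm)]⟩
    · exact ⟨i, hi, by rwa [Function.update_self, hys i hi]⟩

theorem exists_saturated [Fintype V] (hxy : H.Adj x y) (hH : ¬ EdgeColorable H k)
    (hφ : IsProperEdgeColoring (H.deleteEdges {s(x, y)}) k φ) :
    ∃ ys p, 0 < p ∧ IsMultifan H k φ x y ys p ∧
      ∀ i < p, ∀ γ ∈ missingColors (H.deleteEdges {s(x, y)}) k φ (ys i),
        ∃ j, 0 < j ∧ j < p ∧ φ s(x, ys j) = γ := by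
  by_contra! hsat
  have hlong : ∀ n, ∃ ys, IsMultifan H k φ x y ys (n + 1) := by
    intro n
    induction n with
    | zero => exact ⟨fun _ => y, rfl, fun _ _ => hxy, fun i hi j hj _ => by simp_all, by omega⟩
    | succ n ih =>
      obtain ⟨ys, hF⟩ := ih
      obtain ⟨i, hi, γ, hγ, hfree⟩ := hsat ys (n + 1) n.succ_pos hF
      -- `γ` is not missing at `x`, so it colours an edge `s(x, z)` with `z` outside the fan
      obtain ⟨z, hz, hzγ⟩ : ∃ z, (H.deleteEdges {s(x, y)}).Adj x z ∧ φ s(x, z) = γ := by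
        by_contra! h
        exact hH ((hF.mono (by omega)).edgeColorable hxy hφ (mem_missingColors_iff.2 ⟨hγ.1, h⟩) hγ)
      refine ⟨_, hF.update ((deleteEdges_adj ..).1 hz).1 (fun j hj hjz => ?_) hi (hzγ ▸ hγ)⟩
      rcases Nat.eq_zero_or_pos j with rfl | h0
      · exact ((deleteEdges_adj ..).1 hz).2 (by rw [← hjz, hF.zero]; rfl)
      · exact hfree j h0 hj (hjz ▸ hzγ)
  obtain ⟨ys, hF⟩ := hlong (Fintype.card V)
  have := card_le_card_of_injOn ys (s := range (Fintype.card V + 1)) (t := univ)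
    (fun _ _ => mem_univ _) (by rw [coe_range]; exact hF.injOn)
  simp at this

theorem kempe {δ μ : ℕ} {u : V} (hF : IsMultifan H k φ x y ys p)
    (hx : ¬ (chainGraph (H.deleteEdges {s(x, y)}) φ δ μ).Reachable u x)
    (hcolor : ∀ i, 0 < i → i < p → ∃ j < i, φ s(x, ys i) ∈ missingColors (H.deleteEdges {s(x, y)})
      k (kempeSwap (H.deleteEdges {s(x, y)}) φ δ μ u) (ys j)) :
    IsMultifan H k (kempeSwap (H.deleteEdges {s(x, y)}) φ δ μ u) x y ys p :=
  ⟨hF.zero, hF.adj, hF.injOn, fun i h0 hi => by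
    rw [kempeSwap_of_not_reachable (hF.adj_deleteEdges h0 hi) hx]
    exact hcolor i h0 hi⟩

theorem disjoint_missingColors_of_lt_last [Fintype V] (hxy : H.Adj x y) (hH : ¬ EdgeColorable H k)
    (hφ : IsProperEdgeColoring (H.deleteEdges {s(x, y)}) k φ) (hF : IsMultifan H k φ x y ys (j + 1))
    {δ : ℕ} (hδx : δ ∈ missingColors (H.deleteEdges {s(x, y)}) k φ x)
    (hprev : ∀ i i', i < i' → i' < j → Disjoint (missingColors (H.deleteEdges {s(x, y)}) k φ (ys i))
      (missingColors (H.deleteEdges {s(x, y)}) k φ (ys i')))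
    {t : ℕ} (ht : t < j) :
    Disjoint (missingColors (H.deleteEdges {s(x, y)}) k φ (ys t))
      (missingColors (H.deleteEdges {s(x, y)}) k φ (ys j)) := by
  rw [Set.disjoint_left]
  intro μ hμt hμj
  set D := chainGraph (H.deleteEdges {s(x, y)}) φ δ μ
  have hδ : δ ∈ Icc 1 k := hδx.1
  have hμ : μ ∈ Icc 1 k := hμt.1
  have hne (m : ℕ) (hm0 : 0 < m) (hm : m ≤ j) : φ s(x, ys m) ≠ δ :=
    fun h => color_notMem_missingColors (hF.adj_deleteEdges hm0 (by omega)) (h ▸ hδx)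
  have huniq (l : ℕ) (hl : l < j) (h : μ ∈ missingColors (H.deleteEdges {s(x, y)}) k φ (ys l)) :
      l = t := by
    by_contra hlt
    rcases lt_or_gt_of_ne hlt with hlt | hlt
    · exact Set.disjoint_left.1 (hprev l t hlt ht) h hμt
    · exact Set.disjoint_left.1 (hprev t l hlt hl) hμt h
  by_cases hreach : D.Reachable (ys t) x
  · -- `ys t`, `x` and `ys j` are ends of `(δ, μ)`-chains, so we may swap the chain at `ys j`
    have htj : ¬ D.Reachable (ys t) (ys j) := not_reachable_chainGraph_of_reachable hφ
      (hF.adj t (by omega)).ne.symm (hF.ne_of_ne (by omega) (by omega) ht.ne)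
      (hF.adj j (by omega)).ne (Or.inr hμt) (Or.inl hδx) (Or.inr hμj) hreach
    have hjx : ¬ D.Reachable (ys j) x := fun h => htj (hreach.trans h.symm)
    have hjt : ¬ D.Reachable (ys j) (ys t) := fun h => htj h.symm
    refine hH ((hF.kempe hjx fun m hm0 hm => ?_).edgeColorable hxy (hφ.kempeSwap hδ hμ)
      (δ := δ) ?_ ?_)
    · obtain ⟨l, hl, hcol⟩ := hF.color m hm0 hm
      by_cases hγμ : φ s(x, ys m) = μ
      · refine ⟨t, huniq l (by omega) (hγμ ▸ hcol) ▸ hl, ?_⟩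
        rw [missingColors_kempeSwap_of_not_reachable hjt, hγμ]
        exact hμt
      · exact ⟨l, hl,
          (mem_missingColors_kempeSwap_of_ne hδ hμ (hne m hm0 (by omega)) hγμ).2 hcol⟩
    · rwa [missingColors_kempeSwap_of_not_reachable hjx]
    · rw [mem_missingColors_kempeSwap_of_reachable hδ hμ (Reachable.refl _), Equiv.swap_apply_left]
      exact hμj
  · -- swap the chain at `ys t` and shorten the fan to end at `ys t`
    refine hH (((hF.mono (by omega : t + 1 ≤ j + 1)).kempe hreach fun m hm0 hm => ?_).edgeColorable
      hxy (hφ.kempeSwap hδ hμ) (δ := δ) ?_ ?_)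
    · obtain ⟨l, hl, hcol⟩ := hF.color m hm0 (by omega)
      have hγμ : φ s(x, ys m) ≠ μ := fun h => by
        have := huniq l (by omega) (h ▸ hcol)
        omega
      exact ⟨l, hl,
        (mem_missingColors_kempeSwap_of_ne hδ hμ (hne m hm0 (by omega)) hγμ).2 hcol⟩
    · rwa [missingColors_kempeSwap_of_not_reachable hreach]
    · rw [mem_missingColors_kempeSwap_of_reachable hδ hμ (Reachable.refl _), Equiv.swap_apply_left]
      exact hμt

theorem disjoint_missingColors [Fintype V] (hxy : H.Adj x y) (hH : ¬ EdgeColorable H k)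
    (hx : (H.deleteEdges {s(x, y)}).degree x < k)
    (hφ : IsProperEdgeColoring (H.deleteEdges {s(x, y)}) k φ) (hF : IsMultifan H k φ x y ys p)
    (hij : i < j) (hj : j < p) :
    Disjoint (missingColors (H.deleteEdges {s(x, y)}) k φ (ys i))
      (missingColors (H.deleteEdges {s(x, y)}) k φ (ys j)) := by
  obtain ⟨δ, hδ⟩ := exists_mem_missingColors_of_degree_lt (c := φ) hx
  induction j using Nat.strong_induction_on generalizing i with
  | _ j ih =>
    exact (hF.mono (q := j + 1) (by omega)).disjoint_missingColors_of_lt_last hxy hH hφ hδ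
      (fun i i' hii' hi' => ih i' hi' hii' (by omega)) hij

-- The missing colours at the fan vertices are distinct colours of the edges `s(x, ys j)`, `j > 0`.
theorem sum_card_missingFinset_le [Fintype V] (hxy : H.Adj x y) (hH : ¬ EdgeColorable H k)
    (hx : (H.deleteEdges {s(x, y)}).degree x < k)
    (hφ : IsProperEdgeColoring (H.deleteEdges {s(x, y)}) k φ) (hF : IsMultifan H k φ x y ys p)
    (hsat : ∀ i < p, ∀ γ ∈ missingColors (H.deleteEdges {s(x, y)}) k φ (ys i),
      ∃ j, 0 < j ∧ j < p ∧ φ s(x, ys j) = γ) :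
    ∑ i ∈ range p, #(missingFinset (H.deleteEdges {s(x, y)}) k φ (ys i)) ≤ p - 1 := by
  rw [← card_biUnion fun i hi j hj hij => ?_]
  · calc _ ≤ #((Ico 1 p).image fun j => φ s(x, ys j)) := card_le_card fun γ hγ => ?_
      _ ≤ p - 1 := card_image_le.trans (by simp)
    obtain ⟨i, hi, hγ⟩ := mem_biUnion.1 hγ
    obtain ⟨j, hj0, hjp, rfl⟩ := hsat i (mem_range.1 hi) γ (mem_missingFinset.1 hγ)
    exact mem_image.2 ⟨j, mem_Ico.2 ⟨hj0, hjp⟩, rfl⟩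
  · rw [mem_coe, mem_range] at hi hj
    rw [Function.onFun, ← disjoint_coe, coe_missingFinset, coe_missingFinset]
    rcases lt_or_gt_of_ne hij with hij | hij
    · exact hF.disjoint_missingColors hxy hH hx hφ hij hj
    · exact (hF.disjoint_missingColors hxy hH hx hφ hij hi).symm

end IsMultifan

end Multifan

def IsEdgeCritical (H : SimpleGraph V) (k : ℕ) : Prop :=
  ¬ EdgeColorable H k ∧ ∀ e ∈ H.edgeSet, EdgeColorable (H.deleteEdges {e}) k

theorem exists_isEdgeCritical_le [Finite V] {G : SimpleGraph V} {k : ℕ}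
    (hG : ¬ EdgeColorable G k) : ∃ H ≤ G, IsEdgeCritical H k := by
  obtain ⟨H, hHG, hH⟩ := exists_minimal_le_of_wellFoundedLT (fun H => ¬ EdgeColorable H k) G hG
  refine ⟨H, hHG, hH.prop, fun e he => ?_⟩
  by_contra h
  have := edgeSet_mono (hH.le_of_le h (deleteEdges_le _)) he
  simp [edgeSet_deleteEdges] at this

theorem vizing_adjacency [Fintype V] {H : SimpleGraph V} {k : ℕ} {x y : V}
    (hH : IsEdgeCritical H k) (hdeg : ∀ v, H.degree v ≤ k) (hxy : H.Adj x y) :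
    k + 1 ≤ H.degree y + #{z ∈ H.neighborFinset x | z ≠ y ∧ H.degree z = k} := by
  obtain ⟨φ, hφ⟩ := hH.2 s(x, y) hxy
  have hx : (H.deleteEdges {s(x, y)}).degree x < k := by
    have := degree_deleteEdges_add_one hxy (Sym2.mem_mk_left x y)
    have := hdeg x
    omega
  obtain ⟨ys, p, hp, hF, hsat⟩ := IsMultifan.exists_saturated hxy hH.1 hφ
  set M := fun i => missingFinset (H.deleteEdges {s(x, y)}) k φ (ys i)
  have hsum : ∑ i ∈ range p, #(M i) ≤ p - 1 :=
    hF.sum_card_missingFinset_le hxy hH.1 hx hφ hsat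
  -- `y` misses `k + 1 - deg y` colours and every other fan vertex of degree `< k` misses one
  have hy : k + 1 ≤ H.degree y + #(M 0) := by
    have := le_degree_add_card_missingFinset (G := H.deleteEdges {s(x, y)}) (k := k) (c := φ)
      (v := y)
    have := degree_deleteEdges_add_one hxy (Sym2.mem_mk_right x y)
    simp only [M, hF.zero]
    omega
  have hlow : #{i ∈ Ico 1 p | ¬ H.degree (ys i) = k} ≤ ∑ i ∈ Ico 1 p, #(M i) := by
    rw [card_filter]
    refine sum_le_sum fun i hi => ?_
    split_ifs with hk
    · exact Nat.zero_le _
    obtain ⟨hi0, hip⟩ := mem_Ico.1 hi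
    have := le_degree_add_card_missingFinset (G := H.deleteEdges {s(x, y)}) (k := k) (c := φ)
      (v := ys i)
    rw [degree_deleteEdges_of_notMem (by
      rw [Sym2.mem_iff, not_or]; exact ⟨(hF.adj i hip).ne.symm, hF.ne_y hi0 hip⟩)] at this
    have := hdeg (ys i)
    simp only [M]
    omega
  have hhigh : #{i ∈ Ico 1 p | H.degree (ys i) = k} ≤
      #{z ∈ H.neighborFinset x | z ≠ y ∧ H.degree z = k} := by
    refine card_le_card_of_injOn ys (fun i hi => ?_) (hF.injOn.mono fun i hi => ?_)
    · simp only [coe_filter, mem_Ico, Set.mem_ofPred_eq, mem_neighborFinset] at hi ⊢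
      exact ⟨hF.adj i hi.1.2, hF.ne_y hi.1.1 hi.1.2, hi.2⟩
    · simp only [coe_filter, mem_Ico, Set.mem_ofPred_eq] at hi
      exact hi.1.2
  have hsplit := card_filter_add_card_filter_not (s := Ico 1 p) (fun i => H.degree (ys i) = k)
  rw [range_eq_Ico, sum_eq_sum_Ico_succ_bot hp, zero_add] at hsum
  simp only [Nat.card_Ico] at hsplit
  omega

theorem exists_adj_degree_eq_of_isEdgeCritical [Fintype V] {H : SimpleGraph V} {k : ℕ} {a b : V}
    (hH : IsEdgeCritical H k) (hdeg : ∀ v, H.degree v ≤ k) (hab : H.Adj a b) :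
    ∃ z, H.Adj a z ∧ H.degree z = k := by
  have := vizing_adjacency hH hdeg hab
  have := hdeg b
  obtain ⟨z, hz⟩ := card_pos.1
    (show 0 < #{z ∈ H.neighborFinset a | z ≠ b ∧ H.degree z = k} by omega)
  rw [mem_filter, mem_neighborFinset] at hz
  exact ⟨z, hz.1, hz.2.2⟩

section CriticalSubgraph

variable [Fintype V] {G H : SimpleGraph V}

theorem degree_eq_of_isEdgeCritical (hHG : H ≤ G) (hH : IsEdgeCritical H G.maxDegree)
    (hfull : ∀ z, G.degree z = G.maxDegree →
      #{w ∈ G.neighborFinset z | G.degree w = G.maxDegree} ≤ 2)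
    {a b : V} (hab : H.Adj a b) : H.degree a = G.degree a := by
  obtain ⟨z, haz, hz⟩ :=
    exists_adj_degree_eq_of_isEdgeCritical hH (degree_le_maxDegree_of_le hHG) hab
  have hval := vizing_adjacency hH (degree_le_maxDegree_of_le hHG) haz.symm
  -- the neighbours of `z` of maximum degree other than `a` number at most `2 - [deg_G a = Δ]`
  have hsub : {w ∈ H.neighborFinset z | w ≠ a ∧ H.degree w = G.maxDegree} ⊆
      {w ∈ G.neighborFinset z | G.degree w = G.maxDegree}.erase a := fun w hw => by
    simp only [mem_filter, mem_neighborFinset, mem_erase] at hw ⊢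
    exact ⟨hw.2.1, hHG hw.1, degree_eq_maxDegree_of_le hHG hw.2.2⟩
  have hle := card_le_card hsub
  have h2 := hfull z (degree_eq_maxDegree_of_le hHG hz)
  have hHa : H.degree a ≤ G.degree a := degree_le_of_le hHG
  have hGa := G.degree_le_maxDegree a
  by_cases ha : G.degree a = G.maxDegree
  · rw [card_erase_of_mem (by simpa using ⟨hHG haz.symm, ha⟩)] at hle
    omega
  · have := card_erase_le (s := {w ∈ G.neighborFinset z | G.degree w = G.maxDegree}) (a := a)
    omega

theorem mem_support_of_isEdgeCritical (hG : G.Connected) (hHG : H ≤ G)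
    (hH : IsEdgeCritical H G.maxDegree)
    (hfull : ∀ z, G.degree z = G.maxDegree →
      #{w ∈ G.neighborFinset z | G.degree w = G.maxDegree} ≤ 2)
    (v : V) : v ∈ H.support := by
  obtain ⟨a, b, hab⟩ := exists_adj_of_not_edgeColorable hH.1
  refine (hG.preconnected a v).mem_of_adj_mem (fun u w huw hu => ?_) ((mem_support H).2 ⟨b, hab⟩)
  obtain ⟨b, hub⟩ := (mem_support H).1 hu
  have hN : H.neighborFinset u = G.neighborFinset u :=
    eq_of_subset_of_card_le
      (fun w hw => (mem_neighborFinset ..).2 (hHG ((mem_neighborFinset ..).1 hw)))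
      (by rw [card_neighborFinset_eq_degree, card_neighborFinset_eq_degree,
        degree_eq_of_isEdgeCritical hHG hH hfull hub])
  have huw' : H.Adj u w := by rw [← mem_neighborFinset, hN, mem_neighborFinset]; exact huw
  exact (mem_support H).2 ⟨u, huw'.symm⟩

end CriticalSubgraph

end

open Classical in
theorem stmt_13_general {V : Type*} [Fintype V] (G : SimpleGraph V) (hconn : G.Connected)
    (hclass2b : ¬ EdgeColorable G G.maxDegree)
    (hcore : ∀ v, (G.induce {v : V | G.degree v = G.maxDegree}).degree v ≤ 2)
    (hsame : ∀ u v : V, G.degree u = G.maxDegree → G.degree v = G.maxDegree →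
      {w : V | G.Adj u w ∧ G.degree w = G.maxDegree - 1} =
        {w : V | G.Adj v w ∧ G.degree w = G.maxDegree - 1}) :
    ∀ u x : V, G.degree u = G.maxDegree → G.degree x = G.maxDegree - 1 → G.Adj u x := by
  intro u x hu hx
  obtain ⟨H, hHG, hH⟩ := exists_isEdgeCritical_le hclass2b
  have hfull (z : V) (hz : G.degree z = G.maxDegree) :
      #{w ∈ G.neighborFinset z | G.degree w = G.maxDegree} ≤ 2 := by
    have := hcore ⟨z, hz⟩
    rwa [degree_induce_eq_card_filter] at this
  obtain ⟨b, hxb⟩ := (mem_support H).1 (mem_support_of_isEdgeCritical hconn hHG hH hfull x)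
  obtain ⟨z, hxz, hz⟩ :=
    exists_adj_degree_eq_of_isEdgeCritical hH (degree_le_maxDegree_of_le hHG) hxb
  have hxN : x ∈ {w | G.Adj z w ∧ G.degree w = G.maxDegree - 1} := ⟨hHG hxz.symm, hx⟩
  rw [hsame z u (degree_eq_maxDegree_of_le hHG hz) hu] at hxN
  exact hxN.1

open Classical in
theorem stmt_13 {V : Type*} [Fintype V] (G : SimpleGraph V) (hconn : G.Connected)
    (hclass2a : EdgeColorable G (G.maxDegree + 1))
    (hclass2b : ¬ EdgeColorable G G.maxDegree)
    (hcore : ∀ v, (G.induce {v : V | G.degree v = G.maxDegree}).degree v ≤ 2)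
    (hΔ : 4 ≤ G.maxDegree)
    (hsame : ∀ u v : V, G.degree u = G.maxDegree → G.degree v = G.maxDegree →
      {w : V | G.Adj u w ∧ G.degree w = G.maxDegree - 1} =
        {w : V | G.Adj v w ∧ G.degree w = G.maxDegree - 1}) :
    ∀ u x : V, G.degree u = G.maxDegree → G.degree x = G.maxDegree - 1 → G.Adj u x :=
  stmt_13_general G hconn hclass2b hcore hsame
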